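/- For α, β > 0, the zero sequence is the minimizer of the elastic-net functional Φ_{α,β} if and only if α ≥ sup over nonzero h ∈ ℓ¹ ∩ ℓ² of ⟨K*y^δ, h⟩ / ‖h‖_{ℓ¹}. -/

import Mathlib

noncomputable section

open Filter Topology

/-- `ℓ²(ℕ, ℝ)`. -/
abbrev ltwo : Type := lp (fun _ : ℕ => ℝ) 2

/-- `x ∈ ℓ¹`. -/
def inL1 (x : ltwo) : Prop := Memℓp (fun i => x i) 1

/-- The `ℓ¹`-norm `‖x‖_{ℓ¹} = ∑ |xᵢ|` (junk value if `x ∉ ℓ¹`). -/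
noncomputable def l1norm (x : ltwo) : ℝ := ∑' i, |x i|

/-- The elastic-net functional `Φ_{α,β}(x) = ½‖Kx − y‖² + α‖x‖₁ + (β/2)‖x‖₂²`,
real-valued on its effective domain `ℓ¹ ∩ ℓ²` (the convention `Φ = +∞` off `ℓ¹` is
implemented by restricting all statements to `inL1`). -/
noncomputable def Phi {H : Type*} [NormedAddCommGroup H] [InnerProductSpace ℝ H]
    (K : ltwo →L[ℝ] H) (y : H) (α β : ℝ) (x : ltwo) : ℝ :=
  (1 / 2) * ‖K x - y‖ ^ 2 + α * l1norm x + (β / 2) * ‖x‖ ^ 2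

/-- `x` is a minimizer of `Φ_{α,β}` over `ℓ²` (with the `+∞` convention off `ℓ¹`). -/
def IsMinimizer {H : Type*} [NormedAddCommGroup H] [InnerProductSpace ℝ H]
    (K : ltwo →L[ℝ] H) (y : H) (α β : ℝ) (x : ltwo) : Prop :=
  inL1 x ∧ ∀ z : ltwo, inL1 z → Phi K y α β x ≤ Phi K y α β z

/-! Along a ray `t ↦ t • h` the functional is a quadratic polynomial in `t ≥ 0` whose linear
coefficient is `α ‖h‖₁ - ⟪K h, y⟫` and whose quadratic coefficient is nonnegative. So `0` is a
minimizer iff every linear coefficient is nonnegative, i.e. `⟪K* y, h⟫ ≤ α ‖h‖₁` on `ℓ¹ ∩ ℓ²`. -/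

lemma nonneg_of_forall_pos_mul_add_sq_mul_nonneg {a c : ℝ}
    (h : ∀ t > 0, 0 ≤ t * a + t ^ 2 * c) : 0 ≤ a := by
  have hlim : Tendsto (fun t : ℝ => a + t * c) (𝓝[>] 0) (𝓝 a) := by
    have : Continuous fun t : ℝ => a + t * c := by fun_prop
    simpa using this.continuousWithinAt.tendsto (x := 0) (s := Set.Ioi 0)
  refine ge_of_tendsto hlim (eventually_nhdsWithin_of_forall fun t (ht : 0 < t) => ?_)
  have := h t ht
  rw [show t * a + t ^ 2 * c = t * (a + t * c) by ring] at this
  exact nonneg_of_mul_nonneg_right this ht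

lemma inL1_zero : inL1 0 :=
  zero_memℓp

lemma inL1.summable_abs {x : ltwo} (hx : inL1 x) : Summable fun i => |x i| := by
  simpa using (memℓp_gen_iff (p := 1) one_pos).mp hx

@[simp]
lemma l1norm_zero : l1norm 0 = 0 := by
  simp [l1norm]

lemma l1norm_smul (t : ℝ) (x : ltwo) : l1norm (t • x) = |t| * l1norm x := by
  simp only [l1norm, lp.coeFn_smul, Pi.smul_apply, smul_eq_mul, abs_mul, tsum_mul_left]

lemma l1norm_pos {x : ltwo} (hx : inL1 x) (hne : x ≠ 0) : 0 < l1norm x := by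
  obtain ⟨i, hi⟩ : ∃ i, x i ≠ 0 := by
    by_contra! hzero
    exact hne (lp.ext (funext hzero))
  exact hx.summable_abs.tsum_pos (fun _ => abs_nonneg _) i (abs_pos.mpr hi)

section Phi

variable {H : Type*} [NormedAddCommGroup H] [InnerProductSpace ℝ H]
  (K : ltwo →L[ℝ] H) (y : H) (α β : ℝ)

lemma Phi_smul_of_nonneg (h : ltwo) {t : ℝ} (ht : 0 ≤ t) :
    Phi K y α β (t • h) = Phi K y α β 0 + t * (α * l1norm h - inner ℝ (K h) y)
      + t ^ 2 * ((1 / 2) * ‖K h‖ ^ 2 + (β / 2) * ‖h‖ ^ 2) := by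
  simp only [Phi, map_smul, map_zero, zero_sub, norm_neg, l1norm_zero, norm_zero,
    norm_sub_sq_real, norm_smul, real_inner_smul_left, l1norm_smul, Real.norm_eq_abs,
    abs_of_nonneg ht]
  ring

lemma isMinimizer_zero_iff_inner_le (hβ : 0 ≤ β) :
    IsMinimizer K y α β 0 ↔ ∀ h : ltwo, inL1 h → inner ℝ (K h) y ≤ α * l1norm h := by
  constructor
  · rintro ⟨-, hmin⟩ h hh
    refine sub_nonneg.mp (nonneg_of_forall_pos_mul_add_sq_mul_nonneg
      (c := (1 / 2) * ‖K h‖ ^ 2 + (β / 2) * ‖h‖ ^ 2) fun t ht => ?_)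
    have := hmin (t • h) (hh.const_smul t)
    rw [Phi_smul_of_nonneg K y α β h ht.le] at this
    linarith
  · refine fun hle => ⟨inL1_zero, fun z hz => ?_⟩
    have hquad : 0 ≤ (1 / 2) * ‖K z‖ ^ 2 + (β / 2) * ‖z‖ ^ 2 := by positivity
    have := Phi_smul_of_nonneg K y α β z zero_le_one
    rw [one_smul] at this
    linarith [hle z hz]

end Phi

theorem elasticNet_zero_minimizer_iff_general
    {H : Type*} [NormedAddCommGroup H] [InnerProductSpace ℝ H] [CompleteSpace H]
    (K : ltwo →L[ℝ] H) (ydelta : H) (α β : ℝ) (hβ : 0 < β) :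
    IsMinimizer K ydelta α β 0 ↔
      ∀ h : ltwo, inL1 h → h ≠ 0 →
        (inner ℝ (ContinuousLinearMap.adjoint K ydelta) h : ℝ) / l1norm h ≤ α := by
  rw [isMinimizer_zero_iff_inner_le K ydelta α β hβ.le]
  refine forall_congr' fun h => imp_congr_right fun hh => ?_
  rw [ContinuousLinearMap.adjoint_inner_left, real_inner_comm]
  rcases eq_or_ne h 0 with rfl | hne
  · simp
  · rw [div_le_iff₀ (l1norm_pos hh hne)]
    exact ⟨fun hle _ => hle, fun hle => hle hne⟩

/-- The zero sequence minimizes the elastic-net functional if and only if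
`α ≥ sup_{h ≠ 0} ⟨K*y^δ, h⟩ / ‖h‖₁` (the supremum over nonzero `h ∈ ℓ¹ ∩ ℓ²`). -/
theorem elasticNet_zero_minimizer_iff
    {H : Type*} [NormedAddCommGroup H] [InnerProductSpace ℝ H] [CompleteSpace H]
    (K : ltwo →L[ℝ] H) (ydelta : H) (α β : ℝ) (hα : 0 < α) (hβ : 0 < β) :
    IsMinimizer K ydelta α β 0 ↔
      ∀ h : ltwo, inL1 h → h ≠ 0 →
        (inner ℝ (ContinuousLinearMap.adjoint K ydelta) h : ℝ) / l1norm h ≤ α :=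
  elasticNet_zero_minimizer_iff_general K ydelta α β hβ

end
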